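/- Let D be a finite domain of size k ≥ 2, and let (p₁, q₁) and (p₂, q₂) be parameter pairs in (0,1) with p₁ + (k−1)q₁ = 1, p₂ + (k−1)q₂ = 1, p₁ ≠ q₁, p₂ ≠ q₂. Suppose n independent users each hold v_u ∈ D and each reports x''_u obtained by applying, with independent randomness, two chained randomizers: the first maps v_u to v_u with probability p₁ and to each other fixed value with probability q₁, and the second does the same with (p₂, q₂). Define p_s = p₁p₂ + (k−1)q₁q₂ and q_s = p₁q₂ + q₁p₂ + (k−2)q₁q₂. Then p_s − q_s = (p₁−q₁)(p₂−q₂), q_s = q₁(p₂−q₂) + q₂, and the longitudinal estimator f̂_L(v) = (C(v) − n·q₁·(p₂−q₂) − n·q₂)/(n·(p₁−q₁)·(p₂−q₂)), with C(v) = |{u : x''_u = v}|, is unbiased: E[f̂_L(v)] = f(v) = |{u : v_u = v}|/n for every v ∈ D. -/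

import Mathlib

/-!
Under a product of per-user report distributions, the count `C(v)` is a sum of indicators whose
expectations are the per-user probabilities of reporting `v`, namely `p_s` for the users holding `v`
and `q_s` for the others. So `E[C(v)] = n q_s + (p_s − q_s) · n f(v)`, and the two parameter
identities turn the estimator's correction `n q₁ (p₂ − q₂) + n q₂` into `n q_s` and its scale
into `n (p_s − q_s)`.
-/

open Finset

section ProductWeights

variable {ι α R : Type*} [Fintype ι] [DecidableEq ι] [Fintype α] [CommSemiring R]

theorem sum_prod_eq_one (w : ι → α → R) (hw : ∀ i, ∑ a, w i a = 1) :
    ∑ x : ι → α, ∏ i, w i (x i) = 1 := by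
  rw [← Fintype.prod_sum]
  simp [hw]

theorem sum_prod_mul_apply (w : ι → α → R) (hw : ∀ i, ∑ a, w i a = 1) (i : ι) (f : α → R) :
    ∑ x : ι → α, (∏ j, w j (x j)) * f (x i) = ∑ a, w i a * f a :=
  calc ∑ x : ι → α, (∏ j, w j (x j)) * f (x i)
      = ∑ x : ι → α, ∏ j, w j (x j) * (if j = i then f (x j) else 1) := by
        simp only [prod_mul_distrib, Fintype.prod_ite_eq']
    _ = ∏ j, ∑ a, w j a * (if j = i then f a else 1) :=
        (Fintype.prod_sum fun j a => w j a * if j = i then f a else 1).symm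
    _ = ∏ j, if j = i then ∑ a, w i a * f a else 1 := by
        refine prod_congr rfl fun j _ => ?_
        split_ifs with hj
        · rw [hj]
        · simp [hw]
    _ = ∑ a, w i a * f a := Fintype.prod_ite_eq' i _

theorem sum_prod_mul_card_filter_eq [DecidableEq α] (w : ι → α → R) (hw : ∀ i, ∑ a, w i a = 1)
    (v : α) :
    ∑ x : ι → α, (∏ i, w i (x i)) * (#{i | x i = v} : R) = ∑ i, w i v := by
  simp_rw [natCast_card_filter, mul_sum]
  rw [sum_comm]
  refine sum_congr rfl fun i _ => ?_
  rw [sum_prod_mul_apply w hw i fun a => if a = v then (1 : R) else 0]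
  simp

end ProductWeights

theorem sum_mul_sub_div_of_sum_eq_one {β K : Type*} [Fintype β] [Field K] (P g : β → K)
    (hP : ∑ x, P x = 1) (a d : K) :
    ∑ x, P x * ((g x - a) / d) = (∑ x, P x * g x - a) / d := by
  simp_rw [← mul_div_assoc, ← sum_div, mul_sub, sum_sub_distrib, ← sum_mul, hP, one_mul]

theorem sum_ite_eq_card_mul_add {ι α R : Type*} [Fintype ι] [DecidableEq α] [CommRing R]
    (f : ι → α) (v : α) (p q : R) :
    ∑ i, (if f i = v then p else q) = Fintype.card ι * q + #{i | f i = v} * (p - q) := by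
  rw [sum_ite, sum_const, sum_const, ← card_univ,
    ← card_filter_add_card_filter_not (s := univ) (fun i => f i = v)]
  push_cast [nsmul_eq_mul]
  ring

theorem chained_estimator_unbiased_general
    (D : Type) [Fintype D] [DecidableEq D] (k : ℕ)
    (hcard : Fintype.card D = k)
    (n : ℕ)
    (p₁ q₁ p₂ q₂ : ℝ)
    (hsum₁ : p₁ + ((k : ℝ) - 1) * q₁ = 1) (hpq₁ : p₁ ≠ q₁)
    (hsum₂ : p₂ + ((k : ℝ) - 1) * q₂ = 1) (hpq₂ : p₂ ≠ q₂)
    (ps qs : ℝ)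
    (hps : ps = p₁ * p₂ + ((k : ℝ) - 1) * q₁ * q₂)
    (hqs : qs = p₁ * q₂ + q₁ * p₂ + ((k : ℝ) - 2) * q₁ * q₂)
    (vu : Fin n → D) :
    ps - qs = (p₁ - q₁) * (p₂ - q₂) ∧
    qs = q₁ * (p₂ - q₂) + q₂ ∧
    (∀ v : D,
      ∑ x : Fin n → D,
          (∏ u : Fin n, if x u = vu u then ps else qs) *
            ((((Finset.univ.filter fun u : Fin n => x u = v).card : ℝ) -
                n * q₁ * (p₂ - q₂) - n * q₂) /
              (n * (p₁ - q₁) * (p₂ - q₂))) =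
        ((Finset.univ.filter fun u : Fin n => vu u = v).card : ℝ) / n) := by
  have hgap : ps - qs = (p₁ - q₁) * (p₂ - q₂) := by rw [hps, hqs]; ring
  have hqs' : qs = q₁ * (p₂ - q₂) + q₂ := by rw [hqs]; linear_combination q₂ * hsum₁
  have hmass : ∀ u, ∑ y, (if y = vu u then ps else qs) = 1 := by
    intro u
    refine (sum_ite_eq_card_mul_add id (vu u) ps qs).trans ?_
    simp only [hcard, id, filter_eq', mem_univ, if_true, card_singleton, Nat.cast_one, hps, hqs]
    linear_combination (p₁ + ((k : ℝ) - 1) * q₁) * hsum₂ + hsum₁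
  refine ⟨hgap, hqs', fun v => ?_⟩
  have hexpected : ∑ x : Fin n → D, (∏ u, if x u = vu u then ps else qs) * (#{u | x u = v} : ℝ)
      = n * qs + #{u | vu u = v} * (ps - qs) := by
    rw [sum_prod_mul_card_filter_eq (fun u y => if y = vu u then ps else qs) hmass v]
    simp_rw [@eq_comm _ v]
    rw [sum_ite_eq_card_mul_add, Fintype.card_fin]
  have hgap0 : (p₁ - q₁) * (p₂ - q₂) ≠ 0 := mul_ne_zero (sub_ne_zero.2 hpq₁) (sub_ne_zero.2 hpq₂)
  have hnumerator : (n : ℝ) * qs + #{u | vu u = v} * (ps - qs) - (n * q₁ * (p₂ - q₂) + n * q₂)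
      = #{u | vu u = v} * ((p₁ - q₁) * (p₂ - q₂)) := by
    rw [hgap, hqs']
    ring
  simp only [sub_sub]
  rw [sum_mul_sub_div_of_sum_eq_one _ _ (sum_prod_eq_one _ hmass), hexpected, hnumerator,
    mul_assoc (n : ℝ), mul_div_mul_right _ _ hgap0]

/-- **Chained (memoization-based) longitudinal estimator: end-to-end parameters and
unbiasedness.** `n` independent users each hold `v_u ∈ D` (`|D| = k ≥ 2`) and report
`x''_u` obtained by chaining two randomizers with parameters `(p₁, q₁)` and `(p₂, q₂)`
(`pᵢ + (k−1)qᵢ = 1`, `pᵢ ≠ qᵢ`) with independent randomness; the end-to-end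
probabilities are `p_s = p₁p₂ + (k−1)q₁q₂` of reporting the true value and
`q_s = p₁q₂ + q₁p₂ + (k−2)q₁q₂` of each fixed different value. Then
`p_s − q_s = (p₁−q₁)(p₂−q₂)`, `q_s = q₁(p₂−q₂) + q₂`, and the longitudinal estimator
`f̂_L(v) = (C(v) − n·q₁·(p₂−q₂) − n·q₂)/(n·(p₁−q₁)·(p₂−q₂))` is unbiased. -/
theorem chained_estimator_unbiased
    (D : Type) [Fintype D] [DecidableEq D] (k : ℕ) (hk : 2 ≤ k)
    (hcard : Fintype.card D = k)
    (n : ℕ) (hn : 1 ≤ n)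
    (p₁ q₁ p₂ q₂ : ℝ)
    (hp₁0 : 0 < p₁) (hp₁1 : p₁ < 1) (hq₁0 : 0 < q₁) (hq₁1 : q₁ < 1)
    (hp₂0 : 0 < p₂) (hp₂1 : p₂ < 1) (hq₂0 : 0 < q₂) (hq₂1 : q₂ < 1)
    (hsum₁ : p₁ + ((k : ℝ) - 1) * q₁ = 1) (hpq₁ : p₁ ≠ q₁)
    (hsum₂ : p₂ + ((k : ℝ) - 1) * q₂ = 1) (hpq₂ : p₂ ≠ q₂)
    (ps qs : ℝ)
    (hps : ps = p₁ * p₂ + ((k : ℝ) - 1) * q₁ * q₂)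
    (hqs : qs = p₁ * q₂ + q₁ * p₂ + ((k : ℝ) - 2) * q₁ * q₂)
    (vu : Fin n → D) :
    ps - qs = (p₁ - q₁) * (p₂ - q₂) ∧
    qs = q₁ * (p₂ - q₂) + q₂ ∧
    (∀ v : D,
      ∑ x : Fin n → D,
          (∏ u : Fin n, if x u = vu u then ps else qs) *
            ((((Finset.univ.filter fun u : Fin n => x u = v).card : ℝ) -
                n * q₁ * (p₂ - q₂) - n * q₂) /
              (n * (p₁ - q₁) * (p₂ - q₂))) =
        ((Finset.univ.filter fun u : Fin n => vu u = v).card : ℝ) / n) :=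
  chained_estimator_unbiased_general D k hcard n p₁ q₁ p₂ q₂ hsum₁ hpq₁ hsum₂ hpq₂ ps qs hps hqs vu
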